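/- Let Γ be a (k,d)-one-sided bipartite graph on n vertices with d ≥ n−k. Then the largest eigenvalue of the normalized Laplacian equals (d+k)/d. -/

import Mathlib

/-- The normalized Laplacian `L = I - D⁻¹ A` of a graph, as a real matrix. -/
noncomputable def normLap {V : Type*} [Fintype V] [DecidableEq V] (G : SimpleGraph V)
    [DecidableRel G.Adj] : Matrix V V ℝ :=
  1 - Matrix.of (fun v w => if G.Adj v w then 1 / (G.degree v : ℝ) else 0)

/-- A `(k,d)`-one-sided bipartite graph: the vertex set splits as `V₁ ⊔ V₂` with
`|V₂| = k`, every vertex of `V₁` adjacent to every vertex of `V₂`, no edges inside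
`V₂`, and every vertex of `V₁` of degree `d`. -/
def IsOneSidedBipartite {V : Type*} [Fintype V] [DecidableEq V] (G : SimpleGraph V)
    [DecidableRel G.Adj] (V₁ V₂ : Finset V) (k d : ℕ) : Prop :=
  Disjoint V₁ V₂ ∧ V₁ ∪ V₂ = Finset.univ ∧ V₂.card = k ∧
  (∀ v ∈ V₁, ∀ w ∈ V₂, G.Adj v w) ∧
  (∀ v ∈ V₂, ∀ w ∈ V₂, ¬ G.Adj v w) ∧
  (∀ v ∈ V₁, G.degree v = d)

/-!
An eigenvector `f` of `L = I - D⁻¹A` with eigenvalue `μ` satisfies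
`μ · ∑ deg(v) f(v)² = ∑_{uv ∈ E} (f u - f v)²`. In a one-sided bipartite graph the edges
inside `V₁` contribute at most what the complete graph on `V₁` would, and the other edges form
the complete bipartite graph between `V₁` and `V₂`. Writing `m = |V₁|` and `Sᵢ = ∑_{Vᵢ} f`,
Cauchy–Schwarz on `V₁` and on `V₂` together with `m ≤ d` shows that
`(d + k)/d · ∑ deg(v) f(v)²` exceeds the energy by at least `(d S₁ + m S₂)² / (d m)`.
The bound is attained by `f = k` on `V₁` and `f = -d` on `V₂`.
-/

open Finset Matrix

theorem Finset.sum_sum_sub_sq {ι : Type*} (s t : Finset ι) (f : ι → ℝ) :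
    ∑ i ∈ s, ∑ j ∈ t, (f i - f j) ^ 2
      = #t * ∑ i ∈ s, f i ^ 2 + #s * ∑ j ∈ t, f j ^ 2 - 2 * (∑ i ∈ s, f i) * ∑ j ∈ t, f j := by
  simp only [sub_sq, sum_add_distrib, sum_sub_distrib, sum_const, nsmul_eq_mul, ← mul_sum,
    ← sum_mul, mul_assoc]
  ring

namespace SimpleGraph

variable {V : Type*} [Fintype V] {G : SimpleGraph V} [DecidableRel G.Adj]

theorem sum_degree_mul_sq_pos (hG : ∀ v, 0 < G.degree v) {f : V → ℝ} (hf : f ≠ 0) :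
    0 < ∑ v, G.degree v * f v ^ 2 := by
  obtain ⟨v, hv⟩ := Function.ne_iff.mp hf
  exact sum_pos' (fun w _ => by positivity)
    ⟨v, mem_univ v, mul_pos (by exact_mod_cast hG v) (sq_pos_of_ne_zero hv)⟩

variable [DecidableEq V] (G)

theorem normLap_mulVec_apply (f : V → ℝ) (v : V) :
    (normLap G *ᵥ f) v = f v - (∑ w ∈ G.neighborFinset v, f w) / G.degree v := by
  rw [normLap, sub_mulVec, one_mulVec, Pi.sub_apply]
  simp only [mulVec, dotProduct, of_apply, ite_mul, zero_mul]
  rw [← sum_filter, ← neighborFinset_eq_filter, ← mul_sum, one_div, inv_mul_eq_div]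

theorem degree_mul_normLap_mulVec_apply (f : V → ℝ) (v : V) :
    (G.degree v : ℝ) * (normLap G *ᵥ f) v = (G.lapMatrix ℝ *ᵥ f) v := by
  rw [lapMatrix_mulVec_apply, normLap_mulVec_apply]
  by_cases hv : G.degree v = 0
  · have : G.neighborFinset v = ∅ := by rwa [← card_eq_zero, card_neighborFinset_eq_degree]
    simp [hv, this]
  · field_simp

theorem eigenvalue_mul_sum_degree_mul_sq {f : V → ℝ} {μ : ℝ} (h : normLap G *ᵥ f = μ • f) :
    μ * ∑ v, G.degree v * f v ^ 2
      = (∑ i, ∑ j, if G.Adj i j then (f i - f j) ^ 2 else 0) / 2 := by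
  rw [← lapMatrix_toLinearMap₂', toLinearMap₂'_apply', dotProduct, mul_sum]
  refine sum_congr rfl fun v _ => ?_
  rw [← degree_mul_normLap_mulVec_apply, h, Pi.smul_apply, smul_eq_mul]
  ring

end SimpleGraph

namespace IsOneSidedBipartite

variable {V : Type*} [Fintype V] [DecidableEq V] {G : SimpleGraph V} [DecidableRel G.Adj]
  {V₁ V₂ : Finset V} {k d : ℕ} (hG : IsOneSidedBipartite G V₁ V₂ k d)
include hG

theorem disjoint : Disjoint V₁ V₂ := hG.1

theorem union_eq_univ : V₁ ∪ V₂ = univ := hG.2.1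

theorem card_right : #V₂ = k := hG.2.2.1

theorem adj {v w : V} (hv : v ∈ V₁) (hw : w ∈ V₂) : G.Adj v w := hG.2.2.2.1 v hv w hw

theorem not_adj {v w : V} (hv : v ∈ V₂) (hw : w ∈ V₂) : ¬ G.Adj v w := hG.2.2.2.2.1 v hv w hw

theorem degree_of_mem_left {v : V} (hv : v ∈ V₁) : G.degree v = d := hG.2.2.2.2.2 v hv

theorem mem_or_mem (v : V) : v ∈ V₁ ∨ v ∈ V₂ :=
  mem_union.mp (hG.union_eq_univ ▸ mem_univ v)

theorem card_add_card : #V₁ + k = Fintype.card V := by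
  rw [← hG.card_right, ← card_union_of_disjoint hG.disjoint, hG.union_eq_univ, card_univ]

theorem neighborFinset_of_mem_right {v : V} (hv : v ∈ V₂) : G.neighborFinset v = V₁ := by
  ext w
  rw [SimpleGraph.mem_neighborFinset]
  exact ⟨fun h => (hG.mem_or_mem w).resolve_right fun hw => hG.not_adj hv hw h,
    fun hw => (hG.adj hw hv).symm⟩

theorem degree_of_mem_right {v : V} (hv : v ∈ V₂) : G.degree v = #V₁ := by
  rw [← SimpleGraph.card_neighborFinset_eq_degree, hG.neighborFinset_of_mem_right hv]

theorem filter_mem_right_neighborFinset {v : V} (hv : v ∈ V₁) :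
    {w ∈ G.neighborFinset v | w ∈ V₂} = V₂ := by
  ext w
  rw [mem_filter, SimpleGraph.mem_neighborFinset]
  exact ⟨And.right, fun hw => ⟨hG.adj hv hw, hw⟩⟩

theorem degree_pos (hV₁ : 0 < #V₁) (hd : 0 < d) (v : V) : 0 < G.degree v := by
  rcases hG.mem_or_mem v with hv | hv
  · rwa [hG.degree_of_mem_left hv]
  · rwa [hG.degree_of_mem_right hv]

theorem sum_degree_mul (g : V → ℝ) :
    ∑ v, G.degree v * g v = d * ∑ v ∈ V₁, g v + #V₁ * ∑ v ∈ V₂, g v := by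
  rw [← hG.union_eq_univ, sum_union hG.disjoint, mul_sum, mul_sum]
  congr 1
  · exact sum_congr rfl fun v hv => by rw [hG.degree_of_mem_left hv]
  · exact sum_congr rfl fun v hv => by rw [hG.degree_of_mem_right hv]

theorem normLap_mulVec_eq (hV₁ : 0 < #V₁) (hd : 0 < d) :
    normLap G *ᵥ (fun v => if v ∈ V₂ then -(d : ℝ) else k)
      = ((d + k) / d : ℝ) • fun v => if v ∈ V₂ then -(d : ℝ) else k := by
  have hd' : (d : ℝ) ≠ 0 := by positivity
  funext v
  rw [SimpleGraph.normLap_mulVec_apply, Pi.smul_apply, smul_eq_mul]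
  rcases hG.mem_or_mem v with hv | hv
  · have hsplit := card_filter_add_card_filter_not (s := G.neighborFinset v) (· ∈ V₂)
    rw [hG.filter_mem_right_neighborFinset hv, hG.card_right,
      SimpleGraph.card_neighborFinset_eq_degree, hG.degree_of_mem_left hv] at hsplit
    have hsplit' : (k : ℝ) + #{w ∈ G.neighborFinset v | w ∉ V₂} = d := by exact_mod_cast hsplit
    rw [sum_ite, hG.filter_mem_right_neighborFinset hv, sum_const, sum_const, hG.card_right,
      hG.degree_of_mem_left hv, if_neg (disjoint_left.mp hG.disjoint hv), nsmul_eq_mul,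
      nsmul_eq_mul]
    field_simp
    linear_combination (-(k : ℝ)) * hsplit'
  · have hm : (#V₁ : ℝ) ≠ 0 := by positivity
    rw [hG.neighborFinset_of_mem_right hv, hG.degree_of_mem_right hv, if_pos hv,
      sum_congr rfl fun w hw => if_neg (disjoint_left.mp hG.disjoint hw), sum_const,
      nsmul_eq_mul]
    field_simp
    ring

theorem sum_sum_adj_sub_sq_le (f : V → ℝ) :
    ∑ i, ∑ j, (if G.Adj i j then (f i - f j) ^ 2 else 0)
      ≤ 2 * (#V₁ * ∑ i ∈ V₁, f i ^ 2 - (∑ i ∈ V₁, f i) ^ 2)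
        + 2 * (k * ∑ i ∈ V₁, f i ^ 2 + #V₁ * ∑ j ∈ V₂, f j ^ 2
          - 2 * (∑ i ∈ V₁, f i) * ∑ j ∈ V₂, f j) := by
  have h₁₁ : ∑ i ∈ V₁, ∑ j ∈ V₁, (if G.Adj i j then (f i - f j) ^ 2 else 0)
      ≤ ∑ i ∈ V₁, ∑ j ∈ V₁, (f i - f j) ^ 2 :=
    sum_le_sum fun i _ => sum_le_sum fun j _ => by
      split_ifs
      exacts [le_rfl, sq_nonneg _]
  have h₁₂ : ∑ i ∈ V₁, ∑ j ∈ V₂, (if G.Adj i j then (f i - f j) ^ 2 else 0)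
      = ∑ i ∈ V₁, ∑ j ∈ V₂, (f i - f j) ^ 2 :=
    sum_congr rfl fun i hi => sum_congr rfl fun j hj => if_pos (hG.adj hi hj)
  have h₂₁ : ∑ i ∈ V₂, ∑ j ∈ V₁, (if G.Adj i j then (f i - f j) ^ 2 else 0)
      = ∑ j ∈ V₁, ∑ i ∈ V₂, (f j - f i) ^ 2 := by
    rw [sum_comm]
    exact sum_congr rfl fun j hj => sum_congr rfl fun i hi => by
      rw [if_pos (hG.adj hj hi).symm, ← neg_sub, neg_sq]
  have h₂₂ : ∑ i ∈ V₂, ∑ j ∈ V₂, (if G.Adj i j then (f i - f j) ^ 2 else 0) = 0 :=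
    sum_eq_zero fun i hi => sum_eq_zero fun j hj => if_neg (hG.not_adj hi hj)
  rw [sum_sum_sub_sq] at h₁₁
  rw [← hG.union_eq_univ]
  simp only [sum_union hG.disjoint, sum_add_distrib]
  rw [h₁₂, h₂₁, h₂₂, sum_sum_sub_sq, hG.card_right]
  nlinarith [h₁₁]

theorem mul_sum_sum_adj_sub_sq_le (hV₁ : 0 < #V₁) (hd : #V₁ ≤ d) (f : V → ℝ) :
    d * ∑ i, ∑ j, (if G.Adj i j then (f i - f j) ^ 2 else 0)
      ≤ 2 * (d + k) * ∑ v, G.degree v * f v ^ 2 := by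
  have hE := hG.sum_sum_adj_sub_sq_le f
  rw [hG.sum_degree_mul]
  have hm : (0 : ℝ) < #V₁ := by exact_mod_cast hV₁
  have hmd : (#V₁ : ℝ) ≤ d := by exact_mod_cast hd
  set m : ℝ := (#V₁ : ℝ)
  set X := ∑ i ∈ V₁, f i ^ 2
  set Y := ∑ j ∈ V₂, f j ^ 2
  set S := ∑ i ∈ V₁, f i
  set T := ∑ j ∈ V₂, f j
  have hS : S ^ 2 ≤ m * X := sq_sum_le_card_mul_sum_sq
  have hT : T ^ 2 ≤ k * Y := hG.card_right ▸ sq_sum_le_card_mul_sum_sq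
  -- multiplied by `m`, the slack dominates `(d S + m T)²`
  have hslack : 0 ≤ d * (d - m) * X + k * m * Y + d * S ^ 2 + 2 * d * S * T := by
    refine nonneg_of_mul_nonneg_right ?_ hm
    nlinarith [sq_nonneg (d * S + m * T),
      mul_le_mul_of_nonneg_left hS (by positivity : (0 : ℝ) ≤ d * (d - m)),
      mul_le_mul_of_nonneg_left hT (by positivity : (0 : ℝ) ≤ m * m)]
  nlinarith [mul_le_mul_of_nonneg_left hE (by positivity : (0 : ℝ) ≤ d)]

end IsOneSidedBipartite

theorem stmt10_general {V : Type*} [Fintype V] [DecidableEq V] (G : SimpleGraph V)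
    [DecidableRel G.Adj] (V₁ V₂ : Finset V) (n k d : ℕ)
    (hn : n = Fintype.card V) (hk : 0 < k) (hk2 : k ≤ n - 2)
    (hd : n - k ≤ d)
    (hG : IsOneSidedBipartite G V₁ V₂ k d) :
    IsGreatest {μ : ℝ | ∃ f : V → ℝ, f ≠ 0 ∧ (normLap G).mulVec f = μ • f}
      (((d : ℝ) + (k : ℝ)) / (d : ℝ)) := by
  have hcard := hG.card_add_card
  have hV₁ : 0 < #V₁ := by omega
  have hd₀ : 0 < d := by omega
  refine ⟨⟨_, fun h => ?_, hG.normLap_mulVec_eq hV₁ hd₀⟩, ?_⟩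
  · obtain ⟨v, hv⟩ := card_pos.mp hV₁
    have hfv := congrFun h v
    rw [if_neg (disjoint_left.mp hG.disjoint hv), Pi.zero_apply] at hfv
    exact hk.ne' (by exact_mod_cast hfv)
  · rintro μ ⟨f, hf, hμ⟩
    have hRayleigh := G.eigenvalue_mul_sum_degree_mul_sq hμ
    have hEnergy := hG.mul_sum_sum_adj_sub_sq_le hV₁ (by omega) f
    have hW := SimpleGraph.sum_degree_mul_sq_pos (hG.degree_pos hV₁ hd₀) hf
    rw [le_div_iff₀ (by positivity)]
    nlinarith

theorem stmt10 {V : Type*} [Fintype V] [DecidableEq V] (G : SimpleGraph V)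
    [DecidableRel G.Adj] (V₁ V₂ : Finset V) (n k d : ℕ)
    (hn : n = Fintype.card V) (hk : 0 < k) (hk2 : k ≤ n - 2)
    (hkd : k ≤ d) (hdn : d ≤ n - 1) (hd : n - k ≤ d)
    (hG : IsOneSidedBipartite G V₁ V₂ k d) :
    IsGreatest {μ : ℝ | ∃ f : V → ℝ, f ≠ 0 ∧ (normLap G).mulVec f = μ • f}
      (((d : ℝ) + (k : ℝ)) / (d : ℝ)) :=
  stmt10_general G V₁ V₂ n k d hn hk hk2 hd hG
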